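/- Let d ≥ 1, T > 0, and let u : [0,T] × ℝᵈ → ℝᵈ be twice continuously differentiable with spatial gradient bounded uniformly on [0,T] × ℝᵈ and with vanishing spatial divergence, Σᵢ ∂ᵢuᵢ = 0 everywhere. Let F : [0,T] × ℝᵈ → ℝ^{d×d} be twice continuously differentiable, solve the transport equation ∂ₜF_{ij} + Σ_k u_k ∂_k F_{ij} = Σ_k ∂_k u_i F_{kj} at every point, and satisfy Σᵢ ∂ᵢF_{ij}(0, x) = 0 for every x ∈ ℝᵈ and every j. Then Σᵢ ∂ᵢF_{ij}(t, x) = 0 for every (t,x) ∈ [0,T] × ℝᵈ and every j; i.e., the divergence-free constraint on F propagates in time. (This is the final assertion of Lemma 4.2: if div F₀ = 0 then div F = 0 for all times.) -/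

import Mathlib

/-!
Fix a column `j` and let `g = Σᵢ ∂ᵢFᵢⱼ`. Differentiate the transport equation for `Fᵢⱼ` in `xᵢ`
and sum over `i`: the cross terms `Σᵢₖ ∂ᵢuₖ ∂ₖFᵢⱼ` produced on the two sides agree after swapping
`i` and `k`, second derivatives commute, and the term `Σₖ ∂ₖ(div u) Fₖⱼ` vanishes since
`div u = 0`. What remains is the scalar transport equation `∂ₜg + u · ∇g = 0`. Because `∇u` is
bounded, `u(t, ·)` is Lipschitz uniformly in `t`, so Picard–Lindelöf gives backward characteristics
through every point on time intervals of a fixed length. Along a characteristic `g` is constant,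
and stepping back to time `0` shows `g = 0`.
-/

/-- Time partial derivative of a scalar function on `ℝ × ℝᵈ`. -/
noncomputable def pt {d : ℕ} (f : ℝ × EuclideanSpace ℝ (Fin d) → ℝ)
    (p : ℝ × EuclideanSpace ℝ (Fin d)) : ℝ :=
  fderiv ℝ f p (1, 0)

/-- Spatial partial derivative in the `k`-th direction of a scalar function on `ℝ × ℝᵈ`. -/
noncomputable def px {d : ℕ} (k : Fin d) (f : ℝ × EuclideanSpace ℝ (Fin d) → ℝ)
    (p : ℝ × EuclideanSpace ℝ (Fin d)) : ℝ :=
  fderiv ℝ f p (0, EuclideanSpace.single k 1)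

open Set
open scoped NNReal

theorem LipschitzWith.pi {α ι : Type*} {β : ι → Type*} [Fintype ι] [PseudoEMetricSpace α]
    [∀ i, PseudoEMetricSpace (β i)] {f : ∀ i, α → β i} {K : ℝ≥0}
    (hf : ∀ i, LipschitzWith K (f i)) : LipschitzWith K fun x i => f i x :=
  fun x y => edist_pi_le_iff.2 fun i => hf i x y

section Calculus

variable {V W X : Type*} [NormedAddCommGroup V] [NormedSpace ℝ V]
  [NormedAddCommGroup W] [NormedSpace ℝ W] [NormedAddCommGroup X] [NormedSpace ℝ X]

theorem ContDiff.fderiv_fderiv_apply_comm {f : V → W} (hf : ContDiff ℝ 2 f) (p v w : V) :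
    fderiv ℝ (fun q => fderiv ℝ f q w) p v = fderiv ℝ (fun q => fderiv ℝ f q v) p w := by
  have hd : DifferentiableAt ℝ (fderiv ℝ f) p :=
    (hf.fderiv_right (m := 1) le_rfl).differentiable one_ne_zero p
  have happly : ∀ z, fderiv ℝ (fun q => fderiv ℝ f q z) p = (fderiv ℝ (fderiv ℝ f) p).flip z :=
    fun z => by simpa using fderiv_clm_apply hd (differentiableAt_const z)
  rw [happly, happly]
  exact hf.contDiffAt.isSymmSndFDerivAt (by simp) v w

theorem hasFDerivAt_slice {f : V × W → X} {t : V} {x : W} (hf : DifferentiableAt ℝ f (t, x)) :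
    HasFDerivAt (fun y => f (t, y)) ((fderiv ℝ f (t, x)).comp (.inr ℝ V W)) x :=
  hf.hasFDerivAt.comp x (hasFDerivAt_prodMk_right t x)

end Calculus

section Characteristics

variable {E G : Type*} [NormedAddCommGroup E] [NormedSpace ℝ E]
  [NormedAddCommGroup G] [NormedSpace ℝ G]

theorem exists_eq_forall_mem_Icc_hasDerivWithinAt_of_lipschitzWith [CompleteSpace E]
    {U : ℝ → E → E} {L : ℝ≥0} {tmin t₀ : ℝ} (hle : tmin ≤ t₀) (hshort : 2 * (t₀ - tmin) * L ≤ 1)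
    (hlip : ∀ s ∈ Icc tmin t₀, LipschitzWith L (U s))
    (hcont : ∀ x, ContinuousOn (U · x) (Icc tmin t₀)) (x₀ : E) :
    ∃ γ : ℝ → E, γ t₀ = x₀ ∧
      ∀ s ∈ Icc tmin t₀, HasDerivWithinAt γ (U s (γ s)) (Icc tmin t₀) s := by
  obtain ⟨M, hM⟩ := isCompact_Icc.exists_bound_of_continuousOn (hcont x₀)
  obtain ⟨M', hM'⟩ : ∃ M' : ℝ≥0, ∀ s ∈ Icc tmin t₀, ‖U s x₀‖ ≤ M' :=
    ⟨M.toNNReal, fun s hs => (hM s hs).trans (Real.le_coe_toNNReal M)⟩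
  obtain ⟨h, hh⟩ : ∃ h : ℝ≥0, (h : ℝ) = t₀ - tmin := ⟨_, Real.coe_toNNReal _ (sub_nonneg.2 hle)⟩
  -- on the ball of radius `2 h M'` the field is bounded by `2 M'`, so it traps solutions for time `h`
  have hpl : IsPicardLindelof U (⟨t₀, hle, le_rfl⟩ : Icc tmin t₀) x₀ (2 * h * M') 0
      (M' + L * (2 * h * M')) L := by
    refine ⟨fun s hs => (hlip s hs).lipschitzOnWith, fun x _ => hcont x, ?_, ?_⟩
    · intro s hs x hx
      calc ‖U s x‖ ≤ ‖U s x₀‖ + ‖U s x - U s x₀‖ := norm_le_insert' _ _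
        _ ≤ M' + L * (2 * h * M') := by
          gcongr
          · exact hM' s hs
          · rw [← dist_eq_norm]
            exact (hlip s hs).dist_le_mul x x₀ |>.trans
              (mul_le_mul_of_nonneg_left (Metric.mem_closedBall.1 hx) L.2)
    · simp only [sub_self, NNReal.coe_zero, sub_zero, NNReal.coe_add, NNReal.coe_mul,
        NNReal.coe_ofNat, hh, max_eq_right (sub_nonneg.2 hle)]
      have := mul_le_mul_of_nonneg_left hshort (mul_nonneg M'.coe_nonneg (sub_nonneg.2 hle))
      linear_combination this
  exact hpl.exists_eq_forall_mem_Icc_hasDerivWithinAt₀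

theorem apply_eq_apply_of_fderiv_eq_zero_along {φ : ℝ × E → G} (hφ : Differentiable ℝ φ)
    {γ γ' : ℝ → E} {a b : ℝ} (hab : a ≤ b)
    (hγ : ∀ s ∈ Icc a b, HasDerivWithinAt γ (γ' s) (Icc a b) s)
    (hφγ : ∀ s ∈ Icc a b, fderiv ℝ φ (s, γ s) (1, γ' s) = 0) :
    φ (b, γ b) = φ (a, γ a) := by
  have hderiv : ∀ s ∈ Icc a b,
      HasDerivWithinAt (fun s => φ (s, γ s)) (fderiv ℝ φ (s, γ s) (1, γ' s)) (Icc a b) s :=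
    fun s hs => (hφ _).hasFDerivAt.comp_hasDerivWithinAt s
      ((hasDerivWithinAt_id s _).prodMk (hγ s hs))
  have := norm_image_sub_le_of_norm_deriv_le_segment' hderiv
    (fun s hs => by rw [hφγ s (Ico_subset_Icc_self hs), norm_zero]) b ⟨hab, le_rfl⟩
  rwa [zero_mul, norm_le_zero_iff, sub_eq_zero] at this

theorem eq_zero_of_transport [CompleteSpace E] {U : ℝ → E → E} {L : ℝ≥0} {a b : ℝ}
    (hlip : ∀ s ∈ Icc a b, LipschitzWith L (U s))
    (hcont : ∀ x, ContinuousOn (U · x) (Icc a b)) {φ : ℝ × E → G} (hφ : Differentiable ℝ φ)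
    (htransport : ∀ s ∈ Icc a b, ∀ x, fderiv ℝ φ (s, x) (1, U s x) = 0)
    (hinit : ∀ x, φ (a, x) = 0) :
    ∀ t ∈ Icc a b, ∀ x, φ (t, x) = 0 := by
  obtain ⟨δ, hδ, hδL⟩ : ∃ δ : ℝ, 0 < δ ∧ 2 * δ * L ≤ 1 := by
    refine ⟨(2 * L + 1)⁻¹, by positivity, ?_⟩
    field_simp
    linarith
  -- march backwards along characteristics, `δ` units of time at a step
  have hstep : ∀ n : ℕ, ∀ t ∈ Icc a b, t ≤ a + n * δ → ∀ x, φ (t, x) = 0 := by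
    intro n
    induction n with
    | zero =>
      intro t ht hta x
      rw [le_antisymm (by simpa using hta) ht.1]
      exact hinit x
    | succ n ih =>
      intro t ht htn x
      set tmin := max a (t - δ)
      have hmin : tmin ∈ Icc a t := ⟨le_max_left _ _, max_le ht.1 (by linarith)⟩
      have hsub : Icc tmin t ⊆ Icc a b := Icc_subset_Icc hmin.1 ht.2
      have hshort : 2 * (t - tmin) * L ≤ 1 := by
        have : t - tmin ≤ δ := by linarith [le_max_right a (t - δ)]
        nlinarith [L.coe_nonneg]
      obtain ⟨γ, hγt, hγ⟩ := exists_eq_forall_mem_Icc_hasDerivWithinAt_of_lipschitzWith hmin.2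
        hshort (fun s hs => hlip s (hsub hs)) (fun y => (hcont y).mono hsub) x
      have hmin_le : tmin ≤ a + n * δ := by
        push_cast at htn
        exact max_le (by nlinarith [n.cast_nonneg (α := ℝ)]) (by linarith)
      calc φ (t, x) = φ (t, γ t) := by rw [hγt]
        _ = φ (tmin, γ tmin) := apply_eq_apply_of_fderiv_eq_zero_along hφ hmin.2 hγ
          fun s hs => htransport s (hsub hs) (γ s)
        _ = 0 := ih tmin ⟨hmin.1, hmin.2.trans ht.2⟩ hmin_le (γ tmin)
  intro t ht x
  obtain ⟨n, hn⟩ := exists_nat_ge ((b - a) / δ)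
  refine hstep n t ht ?_ x
  rw [div_le_iff₀ hδ] at hn
  linarith [ht.2]

end Characteristics

section PartialDerivatives

variable {d : ℕ}

local notation "ℝᵈ" => EuclideanSpace ℝ (Fin d)

theorem fderiv_apply_mk (f : ℝ × ℝᵈ → ℝ) (p : ℝ × ℝᵈ) (c : ℝ) (v : ℝᵈ) :
    fderiv ℝ f p (c, v) = c * pt f p + ∑ k, v k * px k f p := by
  have hv : v = ∑ k, v k • EuclideanSpace.single k (1 : ℝ) := by
    simpa using ((EuclideanSpace.basisFun (Fin d) ℝ).sum_repr v).symm
  have hcv : ((c, v) : ℝ × ℝᵈ)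
      = c • ((1 : ℝ), (0 : ℝᵈ)) + ∑ k, v k • ((0 : ℝ), EuclideanSpace.single k (1 : ℝ)) := by
    nth_rewrite 1 [hv]
    refine Prod.ext ?_ ?_ <;> simp [Prod.fst_sum, Prod.snd_sum]
  rw [hcv, map_add, map_smul, map_sum]
  simp only [map_smul, smul_eq_mul, pt, px]

@[fun_prop]
theorem ContDiff.differentiable_px {f : ℝ × ℝᵈ → ℝ} (hf : ContDiff ℝ 2 f) (k : Fin d) :
    Differentiable ℝ (px k f) :=
  ((hf.fderiv_right (m := 1) le_rfl).clm_apply contDiff_const).differentiable one_ne_zero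

@[fun_prop]
theorem ContDiff.differentiable_pt {f : ℝ × ℝᵈ → ℝ} (hf : ContDiff ℝ 2 f) :
    Differentiable ℝ (pt f) :=
  ((hf.fderiv_right (m := 1) le_rfl).clm_apply contDiff_const).differentiable one_ne_zero

theorem px_px_comm {f : ℝ × ℝᵈ → ℝ} (hf : ContDiff ℝ 2 f) (k l : Fin d) (p : ℝ × ℝᵈ) :
    px k (px l f) p = px l (px k f) p :=
  hf.fderiv_fderiv_apply_comm p _ _

theorem px_pt_comm {f : ℝ × ℝᵈ → ℝ} (hf : ContDiff ℝ 2 f) (k : Fin d) (p : ℝ × ℝᵈ) :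
    px k (pt f) p = pt (px k f) p :=
  hf.fderiv_fderiv_apply_comm p _ _

theorem px_eq_zero_of_slice_eq_zero {f : ℝ × ℝᵈ → ℝ} {t : ℝ} {x : ℝᵈ}
    (hf : DifferentiableAt ℝ f (t, x)) (h0 : ∀ y, f (t, y) = 0) (k : Fin d) :
    px k f (t, x) = 0 := by
  have hconst : HasFDerivAt (fun y => f (t, y)) (0 : ℝᵈ →L[ℝ] ℝ) x := by
    simpa only [h0] using hasFDerivAt_const (0 : ℝ) x
  simpa [px] using congr($((hasFDerivAt_slice hf).unique hconst) (EuclideanSpace.single k 1))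

theorem lipschitzWith_slice_of_abs_px_le {f : ℝ × ℝᵈ → ℝ} (hf : Differentiable ℝ f) {t : ℝ}
    {C : ℝ≥0} (hC : ∀ x k, |px k f (t, x)| ≤ C) :
    LipschitzWith (d * C) (fun y => f (t, y)) := by
  refine lipschitzWith_of_nnnorm_fderiv_le (hf.comp (by fun_prop)) fun x => ?_
  rw [← NNReal.coe_le_coe, coe_nnnorm, (hasFDerivAt_slice (hf _)).fderiv]
  refine ContinuousLinearMap.opNorm_le_bound _ (by positivity) fun v => ?_
  rw [ContinuousLinearMap.comp_apply, ContinuousLinearMap.inr_apply, fderiv_apply_mk, zero_mul,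
    zero_add]
  calc ‖∑ k, v k * px k f (t, x)‖ ≤ ∑ k : Fin d, ‖v‖ * (C : ℝ) := by
        refine (norm_sum_le _ _).trans (Finset.sum_le_sum fun k _ => ?_)
        rw [norm_mul]
        exact mul_le_mul (PiLp.norm_apply_le v k) (hC x k) (norm_nonneg _) (norm_nonneg _)
    _ = d * C * ‖v‖ := by
        simp only [Finset.sum_const, Finset.card_univ, Fintype.card_fin, nsmul_eq_mul]
        ring

noncomputable def divergence (G : Fin d → ℝ × ℝᵈ → ℝ) (p : ℝ × ℝᵈ) : ℝ :=
  ∑ i, px i (G i) p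

noncomputable def transportResidual (u G : Fin d → ℝ × ℝᵈ → ℝ) (i : Fin d) : ℝ × ℝᵈ → ℝ :=
  fun p => pt (G i) p + ∑ k, u k p * px k (G i) p - ∑ k, px k (u i) p * G k p

variable {u G : Fin d → ℝ × EuclideanSpace ℝ (Fin d) → ℝ}

theorem differentiable_divergence (hG : ∀ i, ContDiff ℝ 2 (G i)) :
    Differentiable ℝ (divergence G) := by
  unfold divergence
  fun_prop

theorem differentiable_transportResidual (hu : ∀ i, ContDiff ℝ 2 (u i))
    (hG : ∀ i, ContDiff ℝ 2 (G i)) (i : Fin d) : Differentiable ℝ (transportResidual u G i) := by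
  unfold transportResidual
  fun_prop (disch := norm_num)

theorem px_divergence (hG : ∀ i, ContDiff ℝ 2 (G i)) (k : Fin d) (p : ℝ × ℝᵈ) :
    px k (divergence G) p = ∑ i, px i (px k (G i)) p := by
  rw [px]
  unfold divergence
  rw [fderiv_fun_sum fun i _ => ((hG i).differentiable_px i).differentiableAt, sum_apply]
  exact Finset.sum_congr rfl fun i _ => px_px_comm (hG i) k i p

theorem pt_divergence (hG : ∀ i, ContDiff ℝ 2 (G i)) (p : ℝ × ℝᵈ) :
    pt (divergence G) p = ∑ i, px i (pt (G i)) p := by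
  rw [pt]
  unfold divergence
  rw [fderiv_fun_sum fun i _ => ((hG i).differentiable_px i).differentiableAt, sum_apply]
  exact Finset.sum_congr rfl fun i _ => (px_pt_comm (hG i) i p).symm

theorem px_transportResidual (hu : ∀ i, ContDiff ℝ 2 (u i)) (hG : ∀ i, ContDiff ℝ 2 (G i))
    (i : Fin d) (p : ℝ × ℝᵈ) :
    px i (transportResidual u G i) p
      = px i (pt (G i)) p + ∑ k, (u k p * px i (px k (G i)) p + px k (G i) p * px i (u k) p)
        - ∑ k, (px k (u i) p * px i (G k) p + G k p * px i (px k (u i)) p) := by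
  have hdu : ∀ i, Differentiable ℝ (u i) := fun i => (hu i).differentiable (by norm_num)
  have hdG : ∀ i, Differentiable ℝ (G i) := fun i => (hG i).differentiable (by norm_num)
  rw [px]
  unfold transportResidual
  simp (disch := fun_prop) only [fderiv_fun_sub, fderiv_fun_add,
    fderiv_fun_sum, fderiv_fun_mul, sub_apply, add_apply, sum_apply, smul_apply, smul_eq_mul]
  rfl

theorem sum_px_transportResidual (hu : ∀ i, ContDiff ℝ 2 (u i)) (hG : ∀ i, ContDiff ℝ 2 (G i))
    (p : ℝ × ℝᵈ) :
    ∑ i, px i (transportResidual u G i) p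
      = pt (divergence G) p + ∑ k, u k p * px k (divergence G) p
        - ∑ k, px k (divergence u) p * G k p := by
  have hcross : ∑ i, ∑ k, px k (G i) p * px i (u k) p
      = ∑ i, ∑ k, px k (u i) p * px i (G k) p := by
    rw [Finset.sum_comm]
    exact Finset.sum_congr rfl fun i _ => Finset.sum_congr rfl fun k _ => mul_comm _ _
  have hsecond : ∑ i, ∑ k, G k p * px i (px k (u i)) p
      = ∑ k, ∑ i, px i (px k (u i)) p * G k p := by
    rw [Finset.sum_comm]
    exact Finset.sum_congr rfl fun k _ => Finset.sum_congr rfl fun i _ => mul_comm _ _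
  simp only [px_transportResidual hu hG, pt_divergence hG, px_divergence hG, px_divergence hu,
    Finset.sum_add_distrib, Finset.sum_sub_distrib, Finset.mul_sum, Finset.sum_mul]
  rw [hcross, hsecond, Finset.sum_comm (f := fun i k => u k p * _)]
  ring

theorem transport_divergence (hu : ∀ i, ContDiff ℝ 2 (u i)) (hG : ∀ i, ContDiff ℝ 2 (G i))
    (hdiv : ∀ p, divergence u p = 0) {s : ℝ} (hres : ∀ i y, transportResidual u G i (s, y) = 0)
    (y : ℝᵈ) : pt (divergence G) (s, y) + ∑ k, u k (s, y) * px k (divergence G) (s, y) = 0 := by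
  have hpx_res : ∀ i, px i (transportResidual u G i) (s, y) = 0 := fun i =>
    px_eq_zero_of_slice_eq_zero (differentiable_transportResidual hu hG i _) (hres i) i
  have hpx_div : ∀ k, px k (divergence u) (s, y) = 0 := fun k => by
    simp [show divergence u = 0 from funext hdiv, px]
  have hsum := sum_px_transportResidual hu hG (s, y)
  simp only [hpx_res, hpx_div, zero_mul, Finset.sum_const_zero, sub_zero] at hsum
  exact hsum.symm

end PartialDerivatives

theorem div_free_propagates_general
    (d : ℕ) (T : ℝ)
    (u : Fin d → ℝ × EuclideanSpace ℝ (Fin d) → ℝ)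
    (hu : ∀ i, ContDiff ℝ 2 (u i))
    (C : ℝ)
    (hgrad : ∀ t ∈ Set.Icc (0 : ℝ) T, ∀ x (i k : Fin d), |px k (u i) (t, x)| ≤ C)
    (hdiv : ∀ p, ∑ i, px i (u i) p = 0)
    (F : Fin d → Fin d → ℝ × EuclideanSpace ℝ (Fin d) → ℝ)
    (hF : ∀ i j, ContDiff ℝ 2 (F i j))
    (htrans : ∀ t ∈ Set.Icc (0 : ℝ) T, ∀ x (i j : Fin d),
        pt (F i j) (t, x) + ∑ k, u k (t, x) * px k (F i j) (t, x)
          = ∑ k, px k (u i) (t, x) * F k j (t, x))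
    (hinit : ∀ x (j : Fin d), ∑ i, px i (F i j) (0, x) = 0) :
    ∀ t ∈ Set.Icc (0 : ℝ) T, ∀ x (j : Fin d), ∑ i, px i (F i j) (t, x) = 0 := by
  intro t ht x j
  let U : ℝ → EuclideanSpace ℝ (Fin d) → EuclideanSpace ℝ (Fin d) :=
    fun s y => WithLp.toLp 2 fun i => u i (s, y)
  have hlip : ∀ s ∈ Icc 0 T, LipschitzWith _ (U s) := fun s hs =>
    (PiLp.lipschitzWith_toLp 2 _).comp <| LipschitzWith.pi fun i =>
      lipschitzWith_slice_of_abs_px_le ((hu i).differentiable (by norm_num)) fun y k =>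
        (hgrad s hs y i k).trans (Real.le_coe_toNNReal C)
  have hcont : ∀ y, ContinuousOn (U · y) (Icc 0 T) := fun y =>
    Continuous.continuousOn <| (PiLp.continuous_toLp 2 _).comp <| continuous_pi fun i =>
      (hu i).continuous.comp (by fun_prop)
  have htransport : ∀ s ∈ Icc 0 T, ∀ y,
      fderiv ℝ (divergence fun i => F i j) (s, y) (1, U s y) = 0 := fun s hs y => by
    rw [fderiv_apply_mk, one_mul]
    exact transport_divergence hu (fun i => hF i j) hdiv
      (fun i y' => sub_eq_zero.2 (htrans s hs y' i j)) y
  exact eq_zero_of_transport hlip hcont (differentiable_divergence fun i => hF i j) htransport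
    (fun y => hinit y j) t ht x

/-- Propagation of the divergence-free constraint by the transport equation
(the final assertion of Lemma 4.2): if `u` is divergence free with uniformly bounded
spatial gradient and `F` solves `∂ₜF_{ij} + Σ_k u_k ∂_k F_{ij} = Σ_k ∂_k u_i F_{kj}`
with `div F(0,·) = 0`, then `div F(t,·) = 0` for all `t ∈ [0,T]`. -/
theorem div_free_propagates
    (d : ℕ) (hd : 1 ≤ d) (T : ℝ) (hT : 0 < T)
    (u : Fin d → ℝ × EuclideanSpace ℝ (Fin d) → ℝ)
    (hu : ∀ i, ContDiff ℝ 2 (u i))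
    (C : ℝ)
    (hgrad : ∀ t ∈ Set.Icc (0 : ℝ) T, ∀ x (i k : Fin d), |px k (u i) (t, x)| ≤ C)
    (hdiv : ∀ p, ∑ i, px i (u i) p = 0)
    (F : Fin d → Fin d → ℝ × EuclideanSpace ℝ (Fin d) → ℝ)
    (hF : ∀ i j, ContDiff ℝ 2 (F i j))
    (htrans : ∀ t ∈ Set.Icc (0 : ℝ) T, ∀ x (i j : Fin d),
        pt (F i j) (t, x) + ∑ k, u k (t, x) * px k (F i j) (t, x)
          = ∑ k, px k (u i) (t, x) * F k j (t, x))
    (hinit : ∀ x (j : Fin d), ∑ i, px i (F i j) (0, x) = 0) :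
    ∀ t ∈ Set.Icc (0 : ℝ) T, ∀ x (j : Fin d), ∑ i, px i (F i j) (t, x) = 0 :=
  div_free_propagates_general d T u hu C hgrad hdiv F hF htrans hinit
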